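/- Under uniform stability with constant c_n and the bi-Lipschitz parametrization with constants κ₁ > 0 and κ₂ < ∞, for every ε > 0, P( ‖μ_{β̂ₙ} − μ_{β̄ₙ}‖_∞ ≥ ε ) ≤ 2p·exp( −2κ₁²ε² / (n κ₂² c_n²) ). -/

import Mathlib

/-!
By the lower Lipschitz bound, replacing one data point moves `β̂ₙ` by at most
`c / κ₁` in sup-norm, so each coordinate of `β̂ₙ` is a function of independent inputs with bounded
differences `c / κ₁`. McDiarmid's inequality bounds the two-sided tail of each coordinate by
`2 exp (-2 t² / (n (c / κ₁)²))`, and the upper Lipschitz bound together with a union bound over the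
`p` coordinates turns the event `‖μ_{β̂ₙ} - μ_{β̄ₙ}‖ ≥ ε` into `‖β̂ₙ - β̄ₙ‖ ≥ ε / κ₂`.

McDiarmid's inequality is proved by peeling off one coordinate at a time: `f - 𝔼 f` splits into
`f - 𝔼[f | other coordinates]`, sub-Gaussian with parameter `(d₀ / 2)²` for every value of the other
coordinates by Hoeffding's lemma, plus a function of the other coordinates with bounded differences,
handled by induction; the sub-Gaussian parameters add.
-/

open MeasureTheory ProbabilityTheory BoundedContinuousFunction
open scoped NNReal

lemma exists_forall_mem_Icc_of_abs_sub_le {α : Type*} [Nonempty α] {h : α → ℝ} {D : ℝ}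
    (hh : ∀ x y, |h x - h y| ≤ D) : ∃ a, ∀ x, h x ∈ Set.Icc a (a + D) := by
  obtain ⟨x₀⟩ := ‹Nonempty α›
  have hbdd : BddBelow (Set.range h) :=
    ⟨h x₀ - D, by rintro _ ⟨x, rfl⟩; linarith [(abs_le.1 (hh x₀ x)).2]⟩
  refine ⟨⨅ x, h x, fun x => ⟨ciInf_le hbdd x, ?_⟩⟩
  have : h x - D ≤ ⨅ y, h y := le_ciInf fun y => by linarith [(abs_le.1 (hh x y)).2]
  linarith

lemma integrable_of_abs_sub_le {α : Type*} [MeasurableSpace α] {μ : Measure α}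
    [IsProbabilityMeasure μ] {h : α → ℝ} (hm : Measurable h) {D : ℝ}
    (hh : ∀ x y, |h x - h y| ≤ D) : Integrable h μ := by
  have := Measure.nonempty_of_neZero μ
  obtain ⟨a, ha⟩ := exists_forall_mem_Icc_of_abs_sub_le hh
  exact Integrable.of_mem_Icc a (a + D) hm.aemeasurable (ae_of_all _ ha)

lemma ProbabilityTheory.HasSubgaussianMGF.add_prod {α β : Type*} [MeasurableSpace α]
    [MeasurableSpace β] {μ : Measure α} {ν : Measure β} [SFinite μ] [SFinite ν]
    {Y : α × β → ℝ} {X : β → ℝ} {cY cX : ℝ≥0} (hYm : Measurable Y)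
    (hY : ∀ y, HasSubgaussianMGF (fun x => Y (x, y)) cY μ) (hX : HasSubgaussianMGF X cX ν) :
    HasSubgaussianMGF (fun p => Y p + X p.2) (cY + cX) (μ.prod ν) := by
  have hfactor (t : ℝ) (y : β) : ∫ x, Real.exp (t * (Y (x, y) + X y)) ∂μ =
      mgf (fun x => Y (x, y)) μ t * Real.exp (t * X y) := by
    simp_rw [mul_add, Real.exp_add, mgf, integral_mul_const]
  have hint (t : ℝ) : Integrable (fun p : α × β => Real.exp (t * (Y p + X p.2))) (μ.prod ν) := by
    have hmeas : AEStronglyMeasurable (fun p : α × β => Real.exp (t * (Y p + X p.2)))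
        (μ.prod ν) :=
      Real.continuous_exp.comp_aestronglyMeasurable
        ((hYm.aestronglyMeasurable.add hX.aestronglyMeasurable.comp_snd).const_mul t)
    refine (integrable_prod_iff' hmeas).2 ⟨ae_of_all _ fun y => ?_, ?_⟩
    · simp_rw [mul_add, Real.exp_add]
      exact ((hY y).integrable_exp_mul t).mul_const _
    · simp_rw [Real.norm_of_nonneg (Real.exp_pos _).le, hfactor]
      refine (hX.integrable_exp_mul t).bdd_mul (c := Real.exp (cY * t ^ 2 / 2)) ?_ ?_
      · exact (StronglyMeasurable.integral_prod_left (f := fun x y => Real.exp (t * Y (x, y)))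
          (by fun_prop)).aestronglyMeasurable
      · refine ae_of_all _ fun y => ?_
        rw [Real.norm_of_nonneg mgf_nonneg]
        exact (hY y).mgf_le t
  refine ⟨hint, fun t => ?_⟩
  calc mgf (fun p => Y p + X p.2) (μ.prod ν) t
      = ∫ y, mgf (fun x => Y (x, y)) μ t * Real.exp (t * X y) ∂ν := by
        rw [mgf, integral_prod_symm _ (hint t)]
        simp_rw [hfactor]
    _ ≤ ∫ y, Real.exp (cY * t ^ 2 / 2) * Real.exp (t * X y) ∂ν := by
        refine integral_mono_of_nonneg (ae_of_all _ fun y => mul_nonneg mgf_nonneg (by positivity))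
          ((hX.integrable_exp_mul t).const_mul _) (ae_of_all _ fun y => ?_)
        exact mul_le_mul_of_nonneg_right ((hY y).mgf_le t) (Real.exp_pos _).le
    _ ≤ Real.exp (↑(cY + cX) * t ^ 2 / 2) := by
        rw [integral_const_mul, NNReal.coe_add, add_mul, add_div, Real.exp_add]
        gcongr
        exact hX.mgf_le t

lemma measurable_fin_cons {n : ℕ} {Z : Type*} [MeasurableSpace Z] :
    Measurable (fun p : Z × (Fin n → Z) => (Fin.cons p.1 p.2 : Fin (n + 1) → Z)) :=
  measurable_pi_iff.2 fun i =>
    Fin.cases (by simpa using measurable_fst) (fun j => by simpa using measurable_snd.eval) i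

def HasBoundedDifferences {ι Z : Type*} [DecidableEq ι] (f : (ι → Z) → ℝ) (d : ι → ℝ) : Prop :=
  ∀ i z x, |f (Function.update z i x) - f z| ≤ d i

namespace HasBoundedDifferences

section

variable {ι Z : Type*} [DecidableEq ι] {f : (ι → Z) → ℝ} {d : ι → ℝ}

lemma abs_sub_le_sum [Fintype ι] (hf : HasBoundedDifferences f d) (z z' : ι → Z) :
    |f z' - f z| ≤ ∑ i, d i := by
  have key (s : Finset ι) : |f (s.piecewise z' z) - f z| ≤ ∑ i ∈ s, d i := by
    induction s using Finset.induction_on with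
    | empty => simp
    | insert a s ha ih =>
      rw [Finset.piecewise_insert, Finset.sum_insert ha]
      calc |f (Function.update (s.piecewise z' z) a (z' a)) - f z|
          ≤ |f (Function.update (s.piecewise z' z) a (z' a)) - f (s.piecewise z' z)|
            + |f (s.piecewise z' z) - f z| := abs_sub_le _ _ _
        _ ≤ d a + ∑ i ∈ s, d i := add_le_add (hf _ _ _) ih
  simpa using key Finset.univ

end

section Cons

variable {n : ℕ} {Z : Type*} {f : (Fin (n + 1) → Z) → ℝ} {d : Fin (n + 1) → ℝ}

lemma abs_sub_cons_le (hf : HasBoundedDifferences f d) (r : Fin n → Z) (x x' : Z) :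
    |f (Fin.cons x r) - f (Fin.cons x' r)| ≤ d 0 := by
  have := hf 0 (Fin.cons x r) x'
  rwa [Fin.update_cons_zero, abs_sub_comm] at this

lemma comp_cons (hf : HasBoundedDifferences f d) (x : Z) :
    HasBoundedDifferences (fun r => f (Fin.cons x r)) (fun i => d i.succ) := fun i r y => by
  simpa only [Fin.cons_update] using hf i.succ (Fin.cons x r) y

lemma integral_cons [MeasurableSpace Z] {μ : Measure Z} [IsProbabilityMeasure μ]
    (hf : HasBoundedDifferences f d) (hm : Measurable f) :
    HasBoundedDifferences (fun r => ∫ x, f (Fin.cons x r) ∂μ) (fun i => d i.succ) := by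
  intro i r y
  have hint (r : Fin n → Z) : Integrable (fun x => f (Fin.cons x r)) μ :=
    integrable_of_abs_sub_le ((hm.comp measurable_fin_cons).comp measurable_prodMk_right)
      (hf.abs_sub_cons_le r)
  rw [← integral_sub (hint _) (hint _)]
  simpa using norm_integral_le_of_norm_le_const (μ := μ)
    (ae_of_all _ fun x => (Real.norm_eq_abs _).trans_le (hf.comp_cons x i r y))

end Cons

end HasBoundedDifferences

theorem HasBoundedDifferences.hasSubgaussianMGF_sub_integral {Z : Type*} [MeasurableSpace Z]
    {n : ℕ} {ms : Fin n → Measure Z} [∀ i, IsProbabilityMeasure (ms i)] {f : (Fin n → Z) → ℝ}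
    {d : Fin n → ℝ} (hm : Measurable f) (hf : HasBoundedDifferences f d) :
    HasSubgaussianMGF (fun z => f z - ∫ y, f y ∂Measure.pi ms) (∑ i, (‖d i‖₊ / 2) ^ 2)
      (Measure.pi ms) := by
  induction n with
  | zero =>
    have hconst (z : Fin 0 → Z) : f z - ∫ y, f y ∂Measure.pi ms = 0 := by
      simp [Subsingleton.elim _ z]
    simp [hconst]
  | succ n ih =>
    set ms' : Fin n → Measure Z := fun j => ms j.succ
    set F : Z × (Fin n → Z) → ℝ := fun p => f (Fin.cons p.1 p.2)
    set g : (Fin n → Z) → ℝ := fun r => ∫ x, F (x, r) ∂ms 0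
    set e := MeasurableEquiv.piFinSuccAbove (fun _ : Fin (n + 1) => Z) 0
    have he (z : Fin (n + 1) → Z) : F (e z) = f z := by
      simp [F, e, MeasurableEquiv.piFinSuccAbove, Fin.insertNthEquiv]
    have hmp : MeasurePreserving e (Measure.pi ms) ((ms 0).prod (Measure.pi ms')) := by
      simpa only [Fin.zero_succAbove] using measurePreserving_piFinSuccAbove ms 0
    have hFm : Measurable F := hm.comp measurable_fin_cons
    have hgm : Measurable g := (hFm.stronglyMeasurable.integral_prod_left' (μ := ms 0)).measurable
    have hFint : Integrable F ((ms 0).prod (Measure.pi ms')) :=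
      integrable_of_abs_sub_le hFm fun p q => hf.abs_sub_le_sum _ _
    have hmean : ∫ y, f y ∂Measure.pi ms = ∫ r, g r ∂Measure.pi ms' := by
      rw [← integral_prod_symm F hFint, ← hmp.integral_comp' F]
      simp_rw [he]
    have : Nonempty Z := Measure.nonempty_of_neZero (ms 0)
    have hinner (r : Fin n → Z) :
        HasSubgaussianMGF (fun x => F (x, r) - g r) ((‖d 0‖₊ / 2) ^ 2) (ms 0) := by
      obtain ⟨a, ha⟩ := exists_forall_mem_Icc_of_abs_sub_le (hf.abs_sub_cons_le r)
      simpa only [add_sub_cancel_left] using hasSubgaussianMGF_of_mem_Icc (X := fun x => F (x, r))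
        (hFm.comp measurable_prodMk_right).aemeasurable (ae_of_all (ms 0) ha)
    have houter := ih (ms := ms') hgm (hf.integral_cons hm (μ := ms 0))
    have hsum := (HasSubgaussianMGF.add_prod (hFm.sub (hgm.comp measurable_snd)) hinner houter)
    rw [← hmp.map_eq] at hsum
    convert hsum.of_map hmp.measurable.aemeasurable using 1
    · ext z
      simp [he, hmean]
    · rw [Fin.sum_univ_succ]

theorem HasBoundedDifferences.measureReal_abs_sub_integral_ge_le {Z : Type*} [MeasurableSpace Z]
    {n : ℕ} {ms : Fin n → Measure Z} [∀ i, IsProbabilityMeasure (ms i)]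
    {f : (Fin n → Z) → ℝ} {d : Fin n → ℝ} (hm : Measurable f) (hf : HasBoundedDifferences f d)
    {ε : ℝ} (hε : 0 ≤ ε) :
    (Measure.pi ms).real {z | ε ≤ |f z - ∫ y, f y ∂Measure.pi ms|}
      ≤ 2 * Real.exp (-(2 * ε ^ 2) / ∑ i, d i ^ 2) := by
  have hsg := hf.hasSubgaussianMGF_sub_integral (ms := ms) hm
  have hparam : -ε ^ 2 / (2 * ((∑ i, (‖d i‖₊ / 2) ^ 2 : ℝ≥0) : ℝ))
      = -(2 * ε ^ 2) / ∑ i, d i ^ 2 := by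
    push_cast
    simp_rw [Real.norm_eq_abs, div_pow, sq_abs, ← Finset.sum_div]
    ring
  calc (Measure.pi ms).real {z | ε ≤ |f z - ∫ y, f y ∂Measure.pi ms|}
      ≤ (Measure.pi ms).real {z | ε ≤ f z - ∫ y, f y ∂Measure.pi ms}
        + (Measure.pi ms).real {z | ε ≤ -(f z - ∫ y, f y ∂Measure.pi ms)} :=
        (measureReal_mono fun z (hz : ε ≤ _) => le_abs.1 hz).trans (measureReal_union_le _ _)
    _ ≤ 2 * Real.exp (-(2 * ε ^ 2) / ∑ i, d i ^ 2) := by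
        rw [two_mul, ← hparam]
        exact add_le_add (hsg.measure_ge_le hε) (hsg.neg.measure_ge_le hε)

theorem measureReal_norm_sub_integral_ge_le {Z ι : Type*} [MeasurableSpace Z] [Fintype ι] {n : ℕ}
    {ms : Fin n → Measure Z} [∀ i, IsProbabilityMeasure (ms i)] {T : (Fin n → Z) → ι → ℝ}
    (hT : Measurable T) {d : ℝ} (hTd : ∀ i z x, ‖T (Function.update z i x) - T z‖ ≤ d)
    {ε : ℝ} (hε : 0 < ε) :
    (Measure.pi ms).real {z | ε ≤ ‖T z - fun j => ∫ y, T y j ∂Measure.pi ms‖}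
      ≤ 2 * Fintype.card ι * Real.exp (-(2 * ε ^ 2) / (n * d ^ 2)) := by
  set ν := Measure.pi ms
  have hcoord (j : ι) : HasBoundedDifferences (fun z => T z j) (fun _ => d) := fun i z x =>
    (norm_le_pi_norm (T (Function.update z i x) - T z) j).trans (hTd i z x)
  have hcover : {z | ε ≤ ‖T z - fun j => ∫ y, T y j ∂ν‖}
      ⊆ ⋃ j, {z | ε ≤ |T z j - ∫ y, T y j ∂ν|} := by
    intro z (hz : ε ≤ _)
    by_contra hlt
    simp only [Set.mem_iUnion, Set.mem_ofPred_eq, not_exists, not_le] at hlt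
    exact hz.not_gt ((pi_norm_lt_iff hε).2 hlt)
  calc ν.real {z | ε ≤ ‖T z - fun j => ∫ y, T y j ∂ν‖}
      ≤ ∑ j, ν.real {z | ε ≤ |T z j - ∫ y, T y j ∂ν|} :=
        (measureReal_mono hcover).trans (measureReal_iUnion_fintype_le _)
    _ ≤ ∑ _j : ι, 2 * Real.exp (-(2 * ε ^ 2) / (n * d ^ 2)) := by
        refine Finset.sum_le_sum fun j _ => ?_
        simpa using (hcoord j).measureReal_abs_sub_integral_ge_le
          ((measurable_pi_apply j).comp hT) hε.le
    _ = 2 * Fintype.card ι * Real.exp (-(2 * ε ^ 2) / (n * d ^ 2)) := by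
        simp only [Finset.sum_const, Finset.card_univ, nsmul_eq_mul]
        ring

theorem measureReal_norm_sub_integral_ge_le_of_iIndepFun {Ω Z ι : Type*}
    [MeasurableSpace Ω] [MeasurableSpace Z] [Fintype ι] {P : Measure Ω} [IsProbabilityMeasure P]
    {n : ℕ} {Zs : Fin n → Ω → Z} (hmeas : ∀ i, Measurable (Zs i)) (hindep : iIndepFun Zs P)
    {T : (Fin n → Z) → ι → ℝ} (hT : Measurable T) {d : ℝ}
    (hTd : ∀ i z x, ‖T (Function.update z i x) - T z‖ ≤ d) {ε : ℝ} (hε : 0 < ε) :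
    P.real {ω | ε ≤ ‖T (fun i => Zs i ω) - fun j => ∫ ω', T (fun i => Zs i ω') j ∂P‖}
      ≤ 2 * Fintype.card ι * Real.exp (-(2 * ε ^ 2) / (n * d ^ 2)) := by
  have (i : Fin n) : IsProbabilityMeasure (P.map (Zs i)) :=
    Measure.isProbabilityMeasure_map (hmeas i).aemeasurable
  have hZm : Measurable fun ω i => Zs i ω := measurable_pi_lambda _ hmeas
  have hmean : (fun j => ∫ ω, T (fun i => Zs i ω) j ∂P)
      = fun j => ∫ z, T z j ∂P.map fun ω i => Zs i ω := by
    ext j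
    rw [integral_map hZm.aemeasurable hT.eval.aestronglyMeasurable]
  have hS : MeasurableSet {z | ε ≤ ‖T z - fun j => ∫ z, T z j ∂P.map fun ω i => Zs i ω‖} :=
    measurableSet_le measurable_const (hT.sub measurable_const).norm
  rw [hmean]
  refine (map_measureReal_apply hZm hS).symm.trans_le ?_
  rw [hindep.map_fun_eq_pi_map fun i => (hmeas i).aemeasurable]
  exact measureReal_norm_sub_integral_ge_le hT hTd hε

theorem stmt3_general {Ω : Type*} [MeasureSpace Ω] [IsProbabilityMeasure (ℙ : Measure Ω)]
    {Z : Type*} [MeasurableSpace Z] {X : Type*} [TopologicalSpace X]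
    (n p : ℕ)
    (c κ₁ κ₂ : ℝ) (hκ₁ : 0 < κ₁) (hκ₂ : 0 < κ₂)
    (μ : (Fin p → ℝ) → (X →ᵇ ℝ))
    (T : (Fin n → Z) → (Fin p → ℝ)) (hT : Measurable T)
    (hstab : ∀ (i : Fin n) (z z' : Fin n → Z), (∀ j, j ≠ i → z j = z' j) →
      ‖μ (T z) - μ (T z')‖ ≤ c)
    (hbilip : ∀ β β' : Fin p → ℝ,
      κ₁ * ‖β - β'‖ ≤ ‖μ β - μ β'‖ ∧ ‖μ β - μ β'‖ ≤ κ₂ * ‖β - β'‖)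
    (Zs : Fin n → Ω → Z) (hmeas : ∀ i, Measurable (Zs i))
    (hindep : iIndepFun Zs ℙ)
    (ε : ℝ) (hε : 0 < ε) :
    (ℙ {ω | ε ≤ ‖μ (T (fun i => Zs i ω)) -
        μ (fun j => ∫ ω', T (fun i => Zs i ω') j ∂ℙ)‖}).toReal
      ≤ 2 * p * Real.exp (-(2 * κ₁ ^ 2 * ε ^ 2) / (n * κ₂ ^ 2 * c ^ 2)) := by
  have hTd (i : Fin n) (z : Fin n → Z) (x : Z) : ‖T (Function.update z i x) - T z‖ ≤ c / κ₁ := by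
    rw [le_div_iff₀' hκ₁]
    exact (hbilip _ _).1.trans (hstab i _ _ fun j hj => Function.update_of_ne hj x z)
  have hevent : {ω | ε ≤ ‖μ (T (fun i => Zs i ω)) -
        μ (fun j => ∫ ω', T (fun i => Zs i ω') j ∂ℙ)‖}
      ⊆ {ω | ε / κ₂ ≤ ‖T (fun i => Zs i ω) - fun j => ∫ ω', T (fun i => Zs i ω') j ∂ℙ‖} :=
    fun ω (hω : ε ≤ _) => (div_le_iff₀' hκ₂).2 (hω.trans (hbilip _ _).2)
  refine (measureReal_mono hevent).trans <|
    (measureReal_norm_sub_integral_ge_le_of_iIndepFun hmeas hindep hT hTd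
      (div_pos hε hκ₂)).trans_eq ?_
  rw [Fintype.card_fin, div_pow, div_pow]
  congr 2
  field_simp

/-- Lemma 3 (concentration of the fitted predictor around the mean-parameter
predictor): under uniform stability with constant `c_n` and a bi-Lipschitz
parametrization, `P(‖μ_{β̂ₙ} − μ_{β̄ₙ}‖_∞ ≥ ε) ≤ 2p exp(−2κ₁²ε²/(n κ₂² c_n²))`. -/
theorem stmt3 {Ω : Type*} [MeasureSpace Ω] [IsProbabilityMeasure (ℙ : Measure Ω)]
    {Z : Type*} [MeasurableSpace Z] {X : Type*} [TopologicalSpace X]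
    (n p : ℕ) (hn : 0 < n) (hp : 0 < p)
    (c κ₁ κ₂ : ℝ) (hc : 0 < c) (hκ₁ : 0 < κ₁) (hκ₂ : 0 < κ₂)
    (μ : (Fin p → ℝ) → (X →ᵇ ℝ))
    (T : (Fin n → Z) → (Fin p → ℝ)) (hT : Measurable T)
    (hstab : ∀ (i : Fin n) (z z' : Fin n → Z), (∀ j, j ≠ i → z j = z' j) →
      ‖μ (T z) - μ (T z')‖ ≤ c)
    (hbilip : ∀ β β' : Fin p → ℝ,
      κ₁ * ‖β - β'‖ ≤ ‖μ β - μ β'‖ ∧ ‖μ β - μ β'‖ ≤ κ₂ * ‖β - β'‖)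
    (Zs : Fin n → Ω → Z) (hmeas : ∀ i, Measurable (Zs i))
    (hindep : iIndepFun Zs ℙ)
    (hident : ∀ i, Measure.map (Zs i) ℙ = Measure.map (Zs ⟨0, hn⟩) ℙ)
    (ε : ℝ) (hε : 0 < ε) :
    (ℙ {ω | ε ≤ ‖μ (T (fun i => Zs i ω)) -
        μ (fun j => ∫ ω', T (fun i => Zs i ω') j ∂ℙ)‖}).toReal
      ≤ 2 * p * Real.exp (-(2 * κ₁ ^ 2 * ε ^ 2) / (n * κ₂ ^ 2 * c ^ 2)) :=
  stmt3_general n p c κ₁ κ₂ hκ₁ hκ₂ μ T hT hstab hbilip Zs hmeas hindep ε hε
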